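/- Let r : C1 → C2 be an F-linear exact (triangulated) functor between F-linear triangulated categories equipped with weight structures. Assume: (1) the weight structure on C1 is bounded; (2) the heart C_{1,w=0} is semi-primary and pseudo-Abelian; (3) r is weight exact; (4) the induced functor r_{w=0} on hearts is full; (5) r_{w=0} is conservative. Then for any M ∈ C1 and any integer β: M lies in C_{1,w≥β} if and only if r(M) lies in C_{2,w≥β}. -/

import Mathlib

/-! If `M` has weights `≥ m` and `r M` has weights `≥ m + 1`, take a weight decomposition
`A ⟶ M ⟶ B ⟶ A⟦1⟧` with `A` of weights `≤ m` (hence of weight exactly `m`) and `B` of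
weights `≥ m + 1`. By orthogonality `r` kills `A ⟶ M`, so `r δ` is a split epimorphism.
Maps from the shifted heart into `r B` factor through the weight-`(m + 1)` part of `B`, so
fullness on the heart lifts a section of `r δ` to `σ : A⟦1⟧ ⟶ B`; conservativity makes
`σ ≫ δ` invertible. Hence `δ` is epi, `A ⟶ M` vanishes and `M` is a retract of `B`, of
weights `≥ m + 1`. Boundedness lets this step be iterated from a lower bound on the weights
of `M` up to `β`. -/

open CategoryTheory CategoryTheory.Limits CategoryTheory.Pretriangulated

namespace Paper

/-- A morphism `f : X ⟶ Y` belongs to the radical of a preadditive category if,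
for every `g : Y ⟶ X`, the endomorphism `𝟙 X - g ∘ f` is invertible. -/
def InRadical {C : Type*} [Category C] [Preadditive C] {X Y : C} (f : X ⟶ Y) : Prop :=
  ∀ g : Y ⟶ X, IsIso (𝟙 X - f ≫ g)

/-- The Jacobson radical of a (possibly noncommutative) ring, as a two-sided ideal. -/
def ringRadical (R : Type*) [Ring R] : TwoSidedIdeal R :=
  TwoSidedIdeal.jacobson ⊥

/-- A ring is semi-primary if its (Jacobson) radical is nilpotent and the quotient by
the radical is a semisimple ring. -/
def IsSemiprimaryRing (R : Type*) [Ring R] : Prop :=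
  IsSemisimpleRing (ringRadical R).ringCon.Quotient ∧
    ∃ n : ℕ, ∀ f : Fin n → R, (∀ i, f i ∈ ringRadical R) → (List.ofFn f).prod = 0

/-- A class of objects of a preadditive category is semi-primary (André–Kahn) if the
endomorphism ring of each of its objects is a semi-primary ring; for an object `X`,
the radical ideal `rad(X,X)` is exactly the Jacobson radical of `End X`. -/
def SemiprimaryOn {C : Type*} [Category C] [Preadditive C] (P : Set C) : Prop :=
  ∀ X : C, X ∈ P → IsSemiprimaryRing (CategoryTheory.End X)

/-- A class of objects is pseudo-Abelian (idempotent complete) if every idempotent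
endomorphism of one of its objects splits through an object of the class. -/
def PseudoAbelianOn {C : Type*} [Category C] [Preadditive C] (P : Set C) : Prop :=
  ∀ X : C, X ∈ P → ∀ e : X ⟶ X, e ≫ e = e →
    ∃ (Y : C) (_ : Y ∈ P) (p : X ⟶ Y) (i : Y ⟶ X), p ≫ i = e ∧ i ≫ p = 𝟙 Y

variable (C : Type*) [Category C] [Preadditive C] [HasZeroObject C] [HasShift C ℤ]
  [∀ n : ℤ, (CategoryTheory.shiftFunctor C n).Additive] [Pretriangulated C]

/-- A weight structure on a pretriangulated category: classes `le = C_{w≤0}` and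
`ge = C_{w≥0}`, additive (containing zero objects, closed under finite direct sums)
and closed under retracts, with `C_{w≤0} ⊆ C_{w≤1}`, `C_{w≥1} ⊆ C_{w≥0}`,
orthogonality, and existence of weight decompositions. -/
structure WeightStructure where
  le : Set C
  ge : Set C
  le_retract : ∀ {X Y : C} (i : X ⟶ Y) (p : Y ⟶ X), i ≫ p = 𝟙 X → Y ∈ le → X ∈ le
  ge_retract : ∀ {X Y : C} (i : X ⟶ Y) (p : Y ⟶ X), i ≫ p = 𝟙 X → Y ∈ ge → X ∈ ge
  le_zero : ∀ X : C, IsZero X → X ∈ le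
  ge_zero : ∀ X : C, IsZero X → X ∈ ge
  le_add : ∀ {X Y : C} (b : BinaryBicone X Y), b.IsBilimit → X ∈ le → Y ∈ le → b.pt ∈ le
  ge_add : ∀ {X Y : C} (b : BinaryBicone X Y), b.IsBilimit → X ∈ ge → Y ∈ ge → b.pt ∈ ge
  le_shift : ∀ X : C, X ∈ le → X⟦(-1 : ℤ)⟧ ∈ le
  ge_shift : ∀ X : C, X ∈ ge → X⟦(1 : ℤ)⟧ ∈ ge
  orthogonal : ∀ {X Y : C}, X ∈ le → Y⟦(-1 : ℤ)⟧ ∈ ge → ∀ f : X ⟶ Y, f = 0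
  exists_decomp : ∀ M : C, ∃ (A B : C) (f : A ⟶ M) (g : M ⟶ B) (h : B ⟶ A⟦(1 : ℤ)⟧),
    (Triangle.mk f g h ∈ distTriang C) ∧ A ∈ le ∧ B⟦(-1 : ℤ)⟧ ∈ ge

namespace WeightStructure

variable {C} (w : WeightStructure C)

/-- `C_{w ≤ n} := C_{w ≤ 0}[n]`. -/
def leN (n : ℤ) : Set C := {X : C | X⟦-n⟧ ∈ w.le}

/-- `C_{w ≥ n} := C_{w ≥ 0}[n]`. -/
def geN (n : ℤ) : Set C := {X : C | X⟦-n⟧ ∈ w.ge}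

/-- The heart `C_{w = 0} = C_{w ≤ 0} ∩ C_{w ≥ 0}`. -/
def heart : Set C := w.leN 0 ∩ w.geN 0

/-- The weight structure is bounded if every object lies in
`C_{w ≥ m} ∩ C_{w ≤ n}` for some integers `m ≤ n`. -/
def Bounded : Prop := ∀ M : C, ∃ m n : ℤ, m ≤ n ∧ M ∈ w.geN m ∧ M ∈ w.leN n

end WeightStructure

/-- A weight filtration of `M` concentrated at `n`: an exact triangle
`M_{≤ n-1} ⟶ M ⟶ M_{≥ n} ⟶(δ) M_{≤ n-1}[1]` with the two outer terms in
`C_{w ≤ n-1}` and `C_{w ≥ n}` respectively. -/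
def IsWeightFiltrationAt {C : Type*} [Category C] [Preadditive C] [HasZeroObject C]
    [HasShift C ℤ] [∀ n : ℤ, (CategoryTheory.shiftFunctor C n).Additive] [Pretriangulated C]
    (w : WeightStructure C) (n : ℤ) {A M B : C}
    (f : A ⟶ M) (g : M ⟶ B) (δ : B ⟶ A⟦(1 : ℤ)⟧) : Prop :=
  (Triangle.mk f g δ ∈ distTriang C) ∧ A ∈ w.leN (n - 1) ∧ B ∈ w.geN n

/-- A minimal weight filtration concentrated at `n`: a weight filtration concentrated
at `n` whose connecting morphism lies in the radical. -/
def IsMinimalWeightFiltrationAt {C : Type*} [Category C] [Preadditive C] [HasZeroObject C]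
    [HasShift C ℤ] [∀ n : ℤ, (CategoryTheory.shiftFunctor C n).Additive] [Pretriangulated C]
    (w : WeightStructure C) (n : ℤ) {A M B : C}
    (f : A ⟶ M) (g : M ⟶ B) (δ : B ⟶ A⟦(1 : ℤ)⟧) : Prop :=
  IsWeightFiltrationAt w n f g δ ∧ InRadical δ

/-- `M` is without weights `α, α+1, …, β` if it admits a weight filtration avoiding
these weights. -/
def WithoutWeights {C : Type*} [Category C] [Preadditive C] [HasZeroObject C]
    [HasShift C ℤ] [∀ n : ℤ, (CategoryTheory.shiftFunctor C n).Additive] [Pretriangulated C]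
    (w : WeightStructure C) (α β : ℤ) (M : C) : Prop :=
  ∃ (A B : C) (f : A ⟶ M) (g : M ⟶ B) (δ : B ⟶ A⟦(1 : ℤ)⟧),
    (Triangle.mk f g δ ∈ distTriang C) ∧ A ∈ w.leN (α - 1) ∧ B ∈ w.geN (β + 1)

/-- A functor is weight exact if it respects both classes of the weight structures. -/
def WeightExact {C₁ : Type*} [Category C₁] [Preadditive C₁] [HasZeroObject C₁] [HasShift C₁ ℤ]
    [∀ n : ℤ, (CategoryTheory.shiftFunctor C₁ n).Additive] [Pretriangulated C₁]
    {C₂ : Type*} [Category C₂] [Preadditive C₂] [HasZeroObject C₂] [HasShift C₂ ℤ]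
    [∀ n : ℤ, (CategoryTheory.shiftFunctor C₂ n).Additive] [Pretriangulated C₂]
    (w₁ : WeightStructure C₁) (w₂ : WeightStructure C₂) (r : C₁ ⥤ C₂) : Prop :=
  (∀ X : C₁, X ∈ w₁.le → r.obj X ∈ w₂.le) ∧ (∀ X : C₁, X ∈ w₁.ge → r.obj X ∈ w₂.ge)

namespace WeightStructure

variable {C : Type*} [Category C] [Preadditive C] [HasZeroObject C] [HasShift C ℤ]
  [∀ n : ℤ, (shiftFunctor C n).Additive] [Pretriangulated C] (w : WeightStructure C)

lemma mem_le_of_iso {X Y : C} (e : X ≅ Y) (h : Y ∈ w.le) : X ∈ w.le :=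
  w.le_retract e.hom e.inv e.hom_inv_id h

lemma mem_ge_of_iso {X Y : C} (e : X ≅ Y) (h : Y ∈ w.ge) : X ∈ w.ge :=
  w.ge_retract e.hom e.inv e.hom_inv_id h

lemma mem_geN_of_iso {X Y : C} (e : X ≅ Y) {n : ℤ} (h : Y ∈ w.geN n) : X ∈ w.geN n :=
  w.mem_ge_of_iso ((shiftFunctor C (-n)).mapIso e) h

lemma mem_geN_of_retract {X Y : C} {n : ℤ} (i : X ⟶ Y) (p : Y ⟶ X) (hip : i ≫ p = 𝟙 X)
    (hY : Y ∈ w.geN n) : X ∈ w.geN n :=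
  w.ge_retract ((shiftFunctor C (-n)).map i) ((shiftFunctor C (-n)).map p)
    (by rw [← Functor.map_comp, hip, CategoryTheory.Functor.map_id]) hY

lemma shift_mem_leN {X : C} {n : ℤ} (k : ℤ) (h : X ∈ w.leN n) : X⟦k⟧ ∈ w.leN (n + k) :=
  w.mem_le_of_iso ((shiftFunctorAdd' C k (-(n + k)) (-n) (by ring)).app X).symm h

lemma shift_mem_geN {X : C} {n : ℤ} (k : ℤ) (h : X ∈ w.geN n) : X⟦k⟧ ∈ w.geN (n + k) :=
  w.mem_ge_of_iso ((shiftFunctorAdd' C k (-(n + k)) (-n) (by ring)).app X).symm h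

lemma geN_antitone : Antitone w.geN :=
  antitone_int_of_succ_le fun n X hX ↦
    w.mem_ge_of_iso ((shiftFunctorAdd' C (-(n + 1)) 1 (-n) (by ring)).app X) (w.ge_shift _ hX)

lemma hom_eq_zero_of_mem_leN_of_mem_geN {X Y : C} {a b : ℤ} (hab : a < b)
    (hX : X ∈ w.leN a) (hY : Y ∈ w.geN b) (f : X ⟶ Y) : f = 0 := by
  have hY' : (Y⟦-a⟧)⟦(-1 : ℤ)⟧ ∈ w.ge :=
    w.mem_ge_of_iso ((shiftFunctorAdd' C (-a) (-1) (-(a + 1)) (by ring)).app Y).symm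
      (w.geN_antitone (show a + 1 ≤ b by omega) hY)
  apply (shiftFunctor C (-a)).map_injective
  rw [w.orthogonal hX hY' ((shiftFunctor C (-a)).map f), Functor.map_zero]

lemma shift_neg_mem_heart {X : C} {k : ℤ} (h₁ : X ∈ w.leN k) (h₂ : X ∈ w.geN k) :
    X⟦-k⟧ ∈ w.heart :=
  ⟨w.mem_le_of_iso ((shiftFunctorZero C ℤ).app _) h₁,
    w.mem_ge_of_iso ((shiftFunctorZero C ℤ).app _) h₂⟩

lemma exists_isWeightFiltrationAt (M : C) (n : ℤ) :
    ∃ (A B : C) (f : A ⟶ M) (g : M ⟶ B) (δ : B ⟶ A⟦(1 : ℤ)⟧),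
      IsWeightFiltrationAt w n f g δ := by
  obtain ⟨A₀, B₀, f₀, g₀, δ₀, hT₀, hA₀, hB₀⟩ := w.exists_decomp (M⟦-(n - 1)⟧)
  set T := (Triangle.shiftFunctor C (n - 1)).obj (Triangle.mk f₀ g₀ δ₀)
  have hT : T ∈ distTriang C := Triangle.shift_distinguished _ hT₀ (n - 1)
  let e : (M⟦-(n - 1)⟧)⟦n - 1⟧ ≅ M :=
    (shiftFunctorCompIsoId C (-(n - 1)) (n - 1) (by ring)).app M
  obtain ⟨B, g, δ, hT'⟩ := distinguished_cocone_triangle (T.mor₁ ≫ e.hom)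
  obtain ⟨φ, -⟩ := exists_iso_of_arrow_iso T _ hT hT'
    (Arrow.isoMk (Iso.refl _) e (Category.id_comp _))
  refine ⟨_, B, _, g, δ, hT', ?_, ?_⟩
  · have hA₀' : A₀ ∈ w.leN 0 :=
      w.mem_le_of_iso ((shiftFunctorZero' C (-0 : ℤ) neg_zero).app A₀) hA₀
    exact (by simpa using w.shift_mem_leN (n - 1) hA₀' : A₀⟦n - 1⟧ ∈ w.leN (n - 1))
  · have hB : B₀⟦n - 1⟧ ∈ w.geN n := by
      simpa using w.shift_mem_geN (n - 1) (show B₀ ∈ w.geN 1 from hB₀)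
    exact w.mem_geN_of_iso (Triangle.π₃.mapIso φ).symm hB

end WeightStructure

section

variable {C : Type*} [Category C] [Preadditive C] [HasZeroObject C] [HasShift C ℤ]
  [∀ n : ℤ, (shiftFunctor C n).Additive] [Pretriangulated C] {w : WeightStructure C}

lemma IsWeightFiltrationAt.mem_geN_of_eq_zero {n : ℤ} {A M B : C} {f : A ⟶ M} {g : M ⟶ B}
    {δ : B ⟶ A⟦(1 : ℤ)⟧} (h : IsWeightFiltrationAt w n f g δ) (hf : f = 0) : M ∈ w.geN n :=
  have : Mono g := (Triangle.mk f g δ).mono₂ h.1 hf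
  have : IsSplitMono g := isSplitMono_of_mono g
  w.mem_geN_of_retract g (retraction g) (IsSplitMono.id g) h.2.2

lemma WeightStructure.mem_geN₂ {n : ℤ} {T : Triangle C} (hT : T ∈ distTriang C)
    (h₁ : T.obj₁ ∈ w.geN n) (h₃ : T.obj₃ ∈ w.geN n) : T.obj₂ ∈ w.geN n := by
  obtain ⟨A, B, f, g, δ, hF⟩ := w.exists_isWeightFiltrationAt T.obj₂ n
  obtain ⟨a, rfl⟩ := Triangle.coyoneda_exact₂ T hT f
    (w.hom_eq_zero_of_mem_leN_of_mem_geN (by omega) hF.2.1 h₃ _)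
  have ha : a = 0 := w.hom_eq_zero_of_mem_leN_of_mem_geN (by omega) hF.2.1 h₁ a
  exact hF.mem_geN_of_eq_zero (by rw [ha, zero_comp])

lemma IsWeightFiltrationAt.left_mem_geN {n : ℤ} {A M B : C} {f : A ⟶ M} {g : M ⟶ B}
    {δ : B ⟶ A⟦(1 : ℤ)⟧} (h : IsWeightFiltrationAt w (n + 1) f g δ) (hM : M ∈ w.geN n) :
    A ∈ w.geN n :=
  w.mem_geN₂ (inv_rot_of_distTriang _ h.1) (by simpa using w.shift_mem_geN (-1) h.2.2) hM

end

section ShiftTransport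

variable {C₁ C₂ : Type*} [Category C₁] [Category C₂] {A : Type*} [AddGroup A]
  [HasShift C₁ A] [HasShift C₂ A] (r : C₁ ⥤ C₂) [r.CommShift A]

def FullOn (P : Set C₁) : Prop :=
  ∀ X Y : C₁, X ∈ P → Y ∈ P → ∀ g : r.obj X ⟶ r.obj Y, ∃ f : X ⟶ Y, r.map f = g

def ReflectsIsoOn (P : Set C₁) : Prop :=
  ∀ X Y : C₁, X ∈ P → Y ∈ P → ∀ f : X ⟶ Y, IsIso (r.map f) → IsIso f

lemma map_shift_map {X Y : C₁} (f : X ⟶ Y) (a : A) :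
    r.map (f⟦a⟧') =
      (r.commShiftIso a).hom.app X ≫ (r.map f)⟦a⟧' ≫ (r.commShiftIso a).inv.app Y := by
  simp

variable {r} {P : Set C₁}

lemma FullOn.preimage_shift (h : FullOn r P) (a : A) : FullOn r {X | X⟦a⟧ ∈ P} := by
  intro X Y hX hY g
  obtain ⟨f₀, hf₀⟩ :=
    h _ _ hX hY ((r.commShiftIso a).hom.app X ≫ g⟦a⟧' ≫ (r.commShiftIso a).inv.app Y)
  obtain ⟨f, rfl⟩ := (shiftFunctor C₁ a).map_surjective f₀
  rw [map_shift_map, cancel_epi, cancel_mono] at hf₀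
  exact ⟨f, (shiftFunctor C₂ a).map_injective hf₀⟩

lemma ReflectsIsoOn.preimage_shift (h : ReflectsIsoOn r P) (a : A) :
    ReflectsIsoOn r {X | X⟦a⟧ ∈ P} := by
  intro X Y hX hY f hf
  have : IsIso (f⟦a⟧') := h _ _ hX hY _ (by rw [map_shift_map]; infer_instance)
  exact isIso_of_reflects_iso f (shiftFunctor C₁ a)

end ShiftTransport

section WeightExactFunctor

variable {C₁ : Type*} [Category C₁] [Preadditive C₁] [HasZeroObject C₁] [HasShift C₁ ℤ]
  [∀ n : ℤ, (shiftFunctor C₁ n).Additive] [Pretriangulated C₁]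
  {C₂ : Type*} [Category C₂] [Preadditive C₂] [HasZeroObject C₂] [HasShift C₂ ℤ]
  [∀ n : ℤ, (shiftFunctor C₂ n).Additive] [Pretriangulated C₂]
  {w₁ : WeightStructure C₁} {w₂ : WeightStructure C₂} {r : C₁ ⥤ C₂} [r.CommShift ℤ]

lemma WeightExact.map_mem_leN (hwe : WeightExact w₁ w₂ r) {X : C₁} {n : ℤ}
    (h : X ∈ w₁.leN n) : r.obj X ∈ w₂.leN n :=
  w₂.mem_le_of_iso ((r.commShiftIso (-n)).app X).symm (hwe.1 _ h)

lemma WeightExact.map_mem_geN (hwe : WeightExact w₁ w₂ r) {X : C₁} {n : ℤ}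
    (h : X ∈ w₁.geN n) : r.obj X ∈ w₂.geN n :=
  w₂.mem_ge_of_iso ((r.commShiftIso (-n)).app X).symm (hwe.2 _ h)

variable [r.IsTriangulated]

lemma WeightExact.exists_map_eq (hwe : WeightExact w₁ w₂ r) (hfull : FullOn r w₁.heart)
    {k : ℤ} {X B : C₁} (hX₁ : X ∈ w₁.leN k) (hX₂ : X ∈ w₁.geN k) (hB : B ∈ w₁.geN k)
    (g : r.obj X ⟶ r.obj B) : ∃ φ : X ⟶ B, r.map φ = g := by
  obtain ⟨B₁, B₂, f₁, g₁, δ₁, hF⟩ := w₁.exists_isWeightFiltrationAt B (k + 1)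
  have hB₁ : B₁ ∈ w₁.leN k := by simpa using hF.2.1
  obtain ⟨u, rfl⟩ := Triangle.coyoneda_exact₂ _ (r.map_distinguished _ hF.1) g
    (w₂.hom_eq_zero_of_mem_leN_of_mem_geN (lt_add_one k) (hwe.map_mem_leN hX₁)
      (hwe.map_mem_geN hF.2.2) _)
  obtain ⟨v, rfl⟩ := hfull.preimage_shift (-k) _ _ (w₁.shift_neg_mem_heart hX₁ hX₂)
    (w₁.shift_neg_mem_heart hB₁ (hF.left_mem_geN hB)) u
  exact ⟨v ≫ f₁, r.map_comp _ _⟩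

lemma WeightExact.mem_geN_succ (hwe : WeightExact w₁ w₂ r) (hfull : FullOn r w₁.heart)
    (hcons : ReflectsIsoOn r w₁.heart) {M : C₁} {m : ℤ} (hM : M ∈ w₁.geN m)
    (hrM : r.obj M ∈ w₂.geN (m + 1)) : M ∈ w₁.geN (m + 1) := by
  obtain ⟨A, B, f, g, δ, hF⟩ := w₁.exists_isWeightFiltrationAt M (m + 1)
  have hA : A ∈ w₁.leN m := by simpa using hF.2.1
  have hA₁ : A⟦(1 : ℤ)⟧ ∈ w₁.leN (m + 1) := w₁.shift_mem_leN 1 hA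
  have hA₂ : A⟦(1 : ℤ)⟧ ∈ w₁.geN (m + 1) := w₁.shift_mem_geN 1 (hF.left_mem_geN hM)
  have hrf : r.map f = 0 :=
    w₂.hom_eq_zero_of_mem_leN_of_mem_geN (lt_add_one m) (hwe.map_mem_leN hA) hrM _
  have : Epi (r.map δ ≫ (r.commShiftIso (1 : ℤ)).hom.app A) :=
    Triangle.epi₃ _ (r.map_distinguished _ hF.1) hrf
  have : Epi (r.map δ) := (epi_comp_iff_of_isIso _ _).1 this
  have : IsSplitEpi (r.map δ) := isSplitEpi_of_epi _
  obtain ⟨σ, hσ⟩ := hwe.exists_map_eq hfull hA₁ hA₂ hF.2.2 (section_ (r.map δ))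
  have hA₀ := w₁.shift_neg_mem_heart hA₁ hA₂
  have : IsIso (σ ≫ δ) := hcons.preimage_shift (-(m + 1)) _ _ hA₀ hA₀ _ (by
    rw [r.map_comp, hσ, IsSplitEpi.id]
    infer_instance)
  have : Epi δ := epi_of_epi σ δ
  exact hF.mem_geN_of_eq_zero (Triangle.mor₁_eq_zero_of_epi₃ _ hF.1 this)

lemma WeightExact.mem_geN_of_map_mem_geN (hwe : WeightExact w₁ w₂ r)
    (hfull : FullOn r w₁.heart) (hcons : ReflectsIsoOn r w₁.heart) {M : C₁} {m β : ℤ}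
    (hM : M ∈ w₁.geN m) (hrM : r.obj M ∈ w₂.geN β) : M ∈ w₁.geN β := by
  rcases le_or_gt β m with hβm | hmβ
  · exact w₁.geN_antitone hβm hM
  · have key : ∀ b, m ≤ b → b ≤ β → M ∈ w₁.geN b := by
      intro b hmb
      induction b, hmb using Int.leInduction with
      | base => exact fun _ ↦ hM
      | succ b _ ih =>
        exact fun hb ↦ hwe.mem_geN_succ hfull hcons (ih (by omega)) (w₂.geN_antitone hb hrM)
    exact key β hmβ.le le_rfl

end WeightExactFunctor

theorem statement6
    (F : Type*) [Field F] [CharZero F]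
    {C₁ : Type*} [Category C₁] [Preadditive C₁] [HasZeroObject C₁] [HasShift C₁ ℤ]
    [∀ n : ℤ, (CategoryTheory.shiftFunctor C₁ n).Additive] [Pretriangulated C₁] [CategoryTheory.Linear F C₁]
    {C₂ : Type*} [Category C₂] [Preadditive C₂] [HasZeroObject C₂] [HasShift C₂ ℤ]
    [∀ n : ℤ, (CategoryTheory.shiftFunctor C₂ n).Additive] [Pretriangulated C₂] [CategoryTheory.Linear F C₂]
    (w₁ : WeightStructure C₁) (w₂ : WeightStructure C₂)
    (r : C₁ ⥤ C₂) [r.Additive] [Functor.Linear F r] [r.CommShift ℤ] [r.IsTriangulated]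
    (hbounded : w₁.Bounded)
    (hsemiprimary : SemiprimaryOn w₁.heart) (hpseudoabelian : PseudoAbelianOn w₁.heart)
    (hwe : WeightExact w₁ w₂ r)
    (hfull : ∀ X Y : C₁, X ∈ w₁.heart → Y ∈ w₁.heart →
      ∀ g : r.obj X ⟶ r.obj Y, ∃ f : X ⟶ Y, r.map f = g)
    (hcons : ∀ X Y : C₁, X ∈ w₁.heart → Y ∈ w₁.heart →
      ∀ f : X ⟶ Y, IsIso (r.map f) → IsIso f)
    (M : C₁) (β : ℤ) :
    M ∈ w₁.geN β ↔ r.obj M ∈ w₂.geN β := by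
  obtain ⟨m, -, -, hm, -⟩ := hbounded M
  exact ⟨hwe.map_mem_geN, hwe.mem_geN_of_map_mem_geN hfull hcons hm⟩

end Paper
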